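/- There exists a symmetric n×n matrix A over K satisfying N_λ·A + A·N_λᵀ = 0 with rank(A) = n − d(λ). -/

import Mathlib

open Matrix

/-- Partial sum `s_r = λ_1 + ⋯ + λ_{r-1}` (where the parts are `lam 0, lam 1, …`). -/
def psum {k : ℕ} (lam : Fin k → ℕ) (r : Fin k) : ℕ :=
  ∑ t ∈ Finset.univ.filter (fun t => t < r), lam t

/-- The `n × n` nilpotent Jordan matrix of type `λ`: its 1-indexed `(i, j)` entry is `1`
if `j = i + 1` and `s_r < i < i + 1 ≤ s_r + λ_r` for some `r`, and `0` otherwise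
(here written with 0-indexed `i`, `j`). -/
def jordanNilpotent (K : Type*) [Field K] (n k : ℕ) (lam : Fin k → ℕ) :
    Matrix (Fin n) (Fin n) K :=
  Matrix.of fun i j =>
    if (j : ℕ) = (i : ℕ) + 1 ∧
        ∃ r : Fin k, psum lam r ≤ (i : ℕ) ∧ (i : ℕ) + 2 ≤ psum lam r + lam r
      then 1 else 0

theorem psum_add_lt {n k : ℕ} (lam : Fin k → ℕ) (hn : ∑ r, lam r = n) (r : Fin k)
    (p : ℕ) (hp : p < lam r) : psum lam r + p < n := by
  have h1 : lam r + psum lam r ≤ ∑ t, lam t := by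
    rw [psum, ← Finset.sum_insert (by simp)]
    exact Finset.sum_le_sum_of_subset (Finset.subset_univ _)
  omega

/-- The index in `Fin n` of the `p`-th position (0-indexed) of the `r`-th block. -/
def blockIdx {n k : ℕ} (lam : Fin k → ℕ) (hn : ∑ r, lam r = n) (r : Fin k) (p : ℕ)
    (hp : p < lam r) : Fin n :=
  ⟨psum lam r + p, psum_add_lt lam hn r p hp⟩

/-- The degeneracy number `d(λ)`: the number of even integers occurring as a part of `λ`
with odd multiplicity. -/
def degeneracy {k : ℕ} (lam : Fin k → ℕ) : ℕ :=
  ((Finset.univ.image lam).filter fun m =>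
    Even m ∧ Odd ((Finset.univ.filter fun r => lam r = m)).card).card

/-!
Index the standard basis by pairs (block `i`, position `p`), so that `N_λ` becomes the shift
`p ↦ p + 1` inside each block (`blockShift`). Choose an involution `τ` of the blocks preserving
their sizes such that, among the blocks of each size, the number of fixed points is the
multiplicity mod 2. Let `d_i` (`pairedLength`) be the size of block `i`, except that `d_i` is one
less when `i` is a `τ`-fixed block of even size, and let `A` (`pairingForm`) pair position `p` of
block `i` with position `d_i - 1 - p` of block `τ i`, with alternating signs. Then `N_λ A` is
antisymmetric, which for symmetric `A` is the equation `N_λ A + A N_λᵀ = 0`, and `A` has a single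
nonzero entry in each of its `∑ d_i` nonzero rows and columns, so its rank is `∑ d_i = n - d(λ)`.
-/

open Matrix Finset Function

theorem Fin.card_fixedPoints_rev (N : ℕ) : Nat.card {i : Fin N // i.rev = i} = N % 2 := by
  have hrev : ∀ i : Fin N, i.rev = i ↔ 2 * i + 1 = N := fun i => by
    rw [Fin.ext_iff, Fin.val_rev]; omega
  rcases Nat.even_or_odd' N with ⟨m, rfl | rfl⟩
  · rw [Nat.mul_mod_right, Nat.card_eq_zero]
    left
    exact ⟨fun ⟨i, hi⟩ => by have := (hrev i).1 hi; omega⟩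
  · rw [Nat.mul_add_mod_self_left, Nat.card_eq_one_iff_exists]
    refine ⟨⟨⟨m, by omega⟩, (hrev _).2 rfl⟩, fun ⟨i, hi⟩ => ?_⟩
    have := (hrev i).1 hi
    ext
    simp only
    omega

theorem exists_involutive_card_fixedPoints (α : Type*) [Finite α] :
    ∃ τ : α → α, Involutive τ ∧ Nat.card {a // τ a = a} = Nat.card α % 2 := by
  obtain ⟨N, ⟨e⟩⟩ := Finite.exists_equiv_fin α
  refine ⟨fun a => e.symm (e a).rev, fun a => by simp, ?_⟩
  rw [Nat.card_congr e, Nat.card_fin, ← Fin.card_fixedPoints_rev]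
  exact Nat.card_congr (e.subtypeEquiv fun a => Equiv.symm_apply_eq e)

theorem exists_involutive_fiberwise_card_fixedPoints {α β : Type*} [Fintype α] [DecidableEq α]
    [DecidableEq β] (f : α → β) :
    ∃ τ : α → α, Involutive τ ∧ (∀ a, f (τ a) = f a) ∧
      ∀ b, #{a | f a = b ∧ τ a = a} = #{a | f a = b} % 2 := by
  choose σ hσ hfix using fun b => exists_involutive_card_fixedPoints {a // f a = b}
  set τ : α → α := fun a => σ (f a) ⟨a, rfl⟩
  have hτσ : ∀ b (x : {a // f a = b}), τ x = σ b x := by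
    rintro b ⟨a, rfl⟩
    rfl
  refine ⟨τ, fun a => ?_, fun a => (σ (f a) ⟨a, rfl⟩).2, fun b => ?_⟩
  · rw [hτσ, hσ]
  · calc #{a | f a = b ∧ τ a = a} = Nat.card {a // f a = b ∧ τ a = a} := by
          rw [Nat.card_eq_fintype_card, Fintype.card_subtype]
      _ = Nat.card {x : {a // f a = b} // σ b x = x} :=
          Nat.card_congr ((Equiv.subtypeSubtypeEquivSubtypeInter _ _).symm.trans
            (Equiv.subtypeEquivRight fun x => by rw [hτσ, Subtype.ext_iff]))
      _ = #{a | f a = b} % 2 := by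
          rw [hfix, Nat.card_eq_fintype_card, Fintype.card_subtype]

theorem neg_one_pow_eq_of_odd_add {R : Type*} [Ring R] {p q : ℕ} (h : Odd (p + q + 1)) :
    (-1 : R) ^ p = (-1) ^ q := by
  obtain ⟨c, hc⟩ := h
  rw [neg_one_pow_eq_pow_mod_two, neg_one_pow_eq_pow_mod_two (n := q)]
  congr 1
  omega

namespace Matrix

variable {m n K : Type*} [Fintype m] [Fintype n] [DecidableEq m] [Field K]

theorem rank_le_card_nonzero_rows (A : Matrix m n K) :
    A.rank ≤ Nat.card {i // ∃ j, A i j ≠ 0} := by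
  classical
  have hA : diagonal (fun i => if ∃ j, A i j ≠ 0 then (1 : K) else 0) * A = A := by
    ext i j
    by_cases hi : ∃ j, A i j ≠ 0
    · simp [hi]
    · push Not at hi
      simp [hi]
  calc A.rank = (diagonal (fun i => if ∃ j, A i j ≠ 0 then (1 : K) else 0) * A).rank := by
        rw [hA]
    _ ≤ (diagonal fun i => if ∃ j, A i j ≠ 0 then (1 : K) else 0).rank := rank_mul_le_left _ _
    _ = Nat.card {i // ∃ j, A i j ≠ 0} := by
        rw [rank_diagonal, ← Nat.card_eq_fintype_card]
        exact Nat.card_congr (Equiv.subtypeEquivRight fun i => by simp)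

theorem rank_eq_card_nonzero_rows_of_partial_monomial {A : Matrix m n K}
    (hrow : ∀ i j j', A i j ≠ 0 → A i j' ≠ 0 → j = j')
    (hcol : ∀ i i' j, A i j ≠ 0 → A i' j ≠ 0 → i = i') :
    A.rank = Nat.card {i // ∃ j, A i j ≠ 0} := by
  classical
  have hdiag : A * Aᵀ = diagonal fun i => ∑ j, A i j * A i j := by
    ext i i'
    rw [mul_apply, diagonal_apply]
    split_ifs with h
    · subst h; rfl
    · refine sum_eq_zero fun j _ => ?_
      by_contra hne
      exact h (hcol i i' j (left_ne_zero_of_mul hne) (right_ne_zero_of_mul hne))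
  have hsq : ∀ i, (∑ j, A i j * A i j ≠ 0) ↔ ∃ j, A i j ≠ 0 := by
    intro i
    refine ⟨fun h => not_forall.mp fun hi => h (by simp [hi]), fun ⟨j, hj⟩ => ?_⟩
    rw [Fintype.sum_eq_single j fun j' hj' => ?_]
    · exact mul_ne_zero hj hj
    · by_contra hne
      exact hj' (hrow i j' j (left_ne_zero_of_mul hne) hj)
  refine le_antisymm A.rank_le_card_nonzero_rows ?_
  calc Nat.card {i // ∃ j, A i j ≠ 0}
      = (A * Aᵀ).rank := by
        rw [hdiag, rank_diagonal, ← Nat.card_eq_fintype_card]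
        exact Nat.card_congr (Equiv.subtypeEquivRight fun i => (hsq i).symm)
    _ ≤ A.rank := rank_mul_le_left _ _

end Matrix

section BlockMatrix

variable {ι : Type*} {ℓ : ι → ℕ} {K : Type*}

def blockShift (K : Type*) [Zero K] [One K] [DecidableEq ι] (ℓ : ι → ℕ) :
    Matrix (Σ i, Fin (ℓ i)) (Σ i, Fin (ℓ i)) K :=
  of fun x y => if x.1 = y.1 ∧ (y.2 : ℕ) = x.2 + 1 then 1 else 0

theorem blockShift_mul_apply [Fintype ι] [DecidableEq ι] [Semiring K]
    (M : Matrix (Σ i, Fin (ℓ i)) (Σ i, Fin (ℓ i)) K) (i : ι) (p : Fin (ℓ i))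
    (y : Σ i, Fin (ℓ i)) :
    (blockShift K ℓ * M) ⟨i, p⟩ y =
      if h : (p : ℕ) + 1 < ℓ i then M ⟨i, ⟨p + 1, h⟩⟩ y else 0 := by
  rw [mul_apply]
  split_ifs with h
  · rw [Fintype.sum_eq_single ⟨i, ⟨p + 1, h⟩⟩]
    · simp [blockShift]
    · rintro ⟨j, q⟩ hne
      rw [blockShift, of_apply, if_neg, zero_mul]
      rintro ⟨rfl, hq⟩
      exact hne (by congr; ext; exact hq)
  · refine Fintype.sum_eq_zero _ fun ⟨j, q⟩ => ?_
    rw [blockShift, of_apply, if_neg, zero_mul]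
    rintro ⟨rfl, hq⟩
    exact h (hq ▸ q.isLt)

variable [LinearOrder ι] {τ : ι → ι}

def pairedLength (τ : ι → ι) (ℓ : ι → ℕ) (i : ι) : ℕ :=
  if τ i = i ∧ Even (ℓ i) then ℓ i - 1 else ℓ i

theorem pairedLength_le (i : ι) : pairedLength τ ℓ i ≤ ℓ i := by
  unfold pairedLength
  split_ifs <;> omega

theorem pairedLength_apply (hτ : Involutive τ) (hℓ : ∀ i, ℓ (τ i) = ℓ i) (i : ι) :
    pairedLength τ ℓ (τ i) = pairedLength τ ℓ i := by
  simp only [pairedLength, hℓ, hτ i, hτ.eq_iff]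

theorem odd_pairedLength {i : ι} (hi : τ i = i) (hℓ : 0 < ℓ i) : Odd (pairedLength τ ℓ i) := by
  unfold pairedLength
  split_ifs with h
  · obtain ⟨c, hc⟩ := h.2
    exact ⟨c - 1, by omega⟩
  · exact Nat.not_even_iff_odd.mp fun he => h ⟨hi, he⟩

theorem sum_pairedLength_add_card_fixed_even [Fintype ι] (hpos : ∀ i, 1 ≤ ℓ i) :
    ∑ i, pairedLength τ ℓ i + #{i | τ i = i ∧ Even (ℓ i)} = ∑ i, ℓ i := by
  rw [card_filter, ← sum_add_distrib]
  refine sum_congr rfl fun i _ => ?_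
  have := hpos i
  unfold pairedLength
  split_ifs <;> omega

/-- The sign is read off the smaller of the two blocks, so that the form is symmetric by
construction. -/
def pairingForm (K : Type*) [Ring K] (τ : ι → ι) (ℓ : ι → ℕ) :
    Matrix (Σ i, Fin (ℓ i)) (Σ i, Fin (ℓ i)) K :=
  of fun x y =>
    if y.1 = τ x.1 ∧ (x.2 : ℕ) + y.2 + 1 = pairedLength τ ℓ x.1 then
      if x.1 ≤ y.1 then (-1) ^ (x.2 : ℕ) else (-1) ^ (y.2 : ℕ)
    else 0

variable [Field K]

theorem pairingForm_ne_zero_iff {x y : Σ i, Fin (ℓ i)} :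
    pairingForm K τ ℓ x y ≠ 0 ↔ y.1 = τ x.1 ∧ (x.2 : ℕ) + y.2 + 1 = pairedLength τ ℓ x.1 := by
  simp only [pairingForm, of_apply]
  split_ifs <;> simp_all

theorem exists_pairingForm_ne_zero_iff (hℓ : ∀ i, ℓ (τ i) = ℓ i) (x : Σ i, Fin (ℓ i)) :
    (∃ y, pairingForm K τ ℓ x y ≠ 0) ↔ (x.2 : ℕ) < pairedLength τ ℓ x.1 := by
  simp only [pairingForm_ne_zero_iff]
  refine ⟨fun ⟨y, _, hy⟩ => by omega, fun hx => ?_⟩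
  have := pairedLength_le (τ := τ) (ℓ := ℓ) x.1
  exact ⟨⟨τ x.1, ⟨pairedLength τ ℓ x.1 - 1 - x.2, by rw [hℓ]; omega⟩⟩, rfl, by simp only; omega⟩

theorem pairingForm_isSymm (hτ : Involutive τ) (hℓ : ∀ i, ℓ (τ i) = ℓ i) :
    (pairingForm K τ ℓ).IsSymm := by
  refine IsSymm.ext fun ⟨i, p⟩ ⟨j, q⟩ => ?_
  simp only [pairingForm, of_apply]
  by_cases hj : j = τ i
  · subst hj
    simp only [hτ i, pairedLength_apply hτ hℓ, add_comm (q : ℕ), true_and]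
    by_cases hd : (p : ℕ) + q + 1 = pairedLength τ ℓ i
    swap
    · rw [if_neg hd, if_neg hd]
    rw [if_pos hd, if_pos hd]
    rcases lt_trichotomy i (τ i) with h | h | h
    · rw [if_neg (not_le.2 h), if_pos h.le]
    · rw [if_pos h.ge, if_pos h.le]
      have hodd : Odd ((q : ℕ) + p + 1) := by
        convert odd_pairedLength h.symm p.pos using 1
        omega
      exact neg_one_pow_eq_of_odd_add hodd
    · rw [if_pos h.le, if_neg (not_le.2 h)]
  · have hi : ¬ i = τ j := fun h => hj (h ▸ (hτ j).symm)
    rw [if_neg (fun h => hi h.1), if_neg (fun h => hj h.1)]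

variable [Fintype ι]

theorem blockShift_mul_pairingForm_apply (i j : ι) (p : Fin (ℓ i)) (q : Fin (ℓ j)) :
    (blockShift K ℓ * pairingForm K τ ℓ) ⟨i, p⟩ ⟨j, q⟩ =
      if j = τ i ∧ (p : ℕ) + q + 2 = pairedLength τ ℓ i then
        if i ≤ j then -(-1) ^ (p : ℕ) else (-1) ^ (q : ℕ)
      else 0 := by
  rw [blockShift_mul_apply]
  by_cases h : j = τ i ∧ (p : ℕ) + q + 2 = pairedLength τ ℓ i
  · have := pairedLength_le (τ := τ) (ℓ := ℓ) i
    simp only [dif_pos (show (p : ℕ) + 1 < ℓ i by omega), pairingForm, of_apply, if_pos h,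
      pow_succ, mul_neg_one]
    rw [if_pos ⟨h.1, by omega⟩]
  · rw [if_neg h]
    split_ifs
    · rw [pairingForm, of_apply, if_neg]
      rintro ⟨hj, hd⟩
      exact h ⟨hj, by simp only at hd; omega⟩
    · rfl

theorem blockShift_mul_pairingForm_add (hτ : Involutive τ) (hℓ : ∀ i, ℓ (τ i) = ℓ i) :
    blockShift K ℓ * pairingForm K τ ℓ + pairingForm K τ ℓ * (blockShift K ℓ)ᵀ = 0 := by
  have hsymm : pairingForm K τ ℓ * (blockShift K ℓ)ᵀ = (blockShift K ℓ * pairingForm K τ ℓ)ᵀ := by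
    rw [transpose_mul, (pairingForm_isSymm hτ hℓ).eq]
  rw [hsymm]
  ext ⟨i, p⟩ ⟨j, q⟩
  rw [Matrix.add_apply, transpose_apply, Matrix.zero_apply, blockShift_mul_pairingForm_apply,
    blockShift_mul_pairingForm_apply]
  by_cases hj : j = τ i
  · subst hj
    simp only [hτ i, pairedLength_apply hτ hℓ, add_comm (q : ℕ), true_and]
    by_cases hd : (p : ℕ) + q + 2 = pairedLength τ ℓ i
    swap
    · rw [if_neg hd, if_neg hd, add_zero]
    rw [if_pos hd, if_pos hd]
    rcases lt_trichotomy i (τ i) with h | h | h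
    · rw [if_pos h.le, if_neg (not_le.2 h), neg_add_cancel]
    · have hodd : Odd ((p : ℕ) + (q + 1) + 1) := by
        convert odd_pairedLength h.symm p.pos using 1
        omega
      rw [if_pos h.le, if_pos h.ge, ← neg_add, neg_eq_zero, neg_one_pow_eq_of_odd_add hodd,
        pow_succ, mul_neg_one, neg_add_cancel]
    · rw [if_neg (not_le.2 h), if_pos h.le, add_neg_cancel]
  · have hi : ¬ i = τ j := fun h => hj (h ▸ (hτ j).symm)
    rw [if_neg (fun h => hj h.1), if_neg (fun h => hi h.1), add_zero]

theorem rank_pairingForm (hτ : Involutive τ) (hℓ : ∀ i, ℓ (τ i) = ℓ i) :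
    (pairingForm K τ ℓ).rank = ∑ i, pairedLength τ ℓ i := by
  have hrow : ∀ x y y', pairingForm K τ ℓ x y ≠ 0 → pairingForm K τ ℓ x y' ≠ 0 → y = y' := by
    rintro x ⟨j, q⟩ ⟨j', q'⟩ hy hy'
    rw [pairingForm_ne_zero_iff] at hy hy'
    obtain ⟨rfl, hq⟩ := hy
    obtain ⟨rfl, hq'⟩ := hy'
    congr
    ext
    simp only at hq hq'
    omega
  have hcol : ∀ x x' y, pairingForm K τ ℓ x y ≠ 0 → pairingForm K τ ℓ x' y ≠ 0 → x = x' := by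
    intro x x' y hx hx'
    rw [← (pairingForm_isSymm hτ hℓ).apply] at hx hx'
    exact hrow y x x' hx hx'
  let e : {x : Σ i, Fin (ℓ i) // (x.2 : ℕ) < pairedLength τ ℓ x.1} ≃
      Σ i, Fin (pairedLength τ ℓ i) :=
    { toFun x := ⟨x.1.1, ⟨x.1.2, x.2⟩⟩
      invFun y := ⟨⟨y.1, Fin.castLE (pairedLength_le y.1) y.2⟩, y.2.2⟩
      left_inv _ := rfl
      right_inv _ := rfl }
  rw [rank_eq_card_nonzero_rows_of_partial_monomial hrow hcol,
    Nat.card_congr ((Equiv.subtypeEquivRight (exists_pairingForm_ne_zero_iff hℓ)).trans e),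
    Nat.card_sigma]
  simp only [Nat.card_eq_fintype_card, Fintype.card_fin]

end BlockMatrix

theorem val_finSigmaFinEquiv_mk {k : ℕ} (lam : Fin k → ℕ) (r : Fin k) (p : Fin (lam r)) :
    (finSigmaFinEquiv ⟨r, p⟩ : ℕ) = psum lam r + p := by
  have hmap :
      (univ : Finset (Fin r)).map (Fin.castLEEmb r.2.le) = ({t | t < r} : Finset (Fin k)) := by
    ext t
    simp only [mem_map, mem_univ, true_and, mem_filter, Fin.castLEEmb_apply]
    exact ⟨by rintro ⟨a, rfl⟩; exact a.2, fun h => ⟨⟨t, h⟩, rfl⟩⟩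
  rw [finSigmaFinEquiv_apply, psum, ← hmap, sum_map]
  rfl

theorem psum_add_le_psum {k : ℕ} (lam : Fin k → ℕ) {r t : Fin k} (h : r < t) :
    psum lam r + lam r ≤ psum lam t := by
  rw [psum, add_comm, ← sum_insert (by simp)]
  refine sum_le_sum_of_subset fun u => ?_
  simp only [mem_insert, mem_filter, mem_univ, true_and]
  omega

theorem eq_of_lt_psum_add {k : ℕ} {lam : Fin k → ℕ} {r t : Fin k} {i : ℕ}
    (hr : psum lam r ≤ i) (hr' : i < psum lam r + lam r)
    (ht : psum lam t ≤ i) (ht' : i < psum lam t + lam t) : r = t := by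
  rcases lt_trichotomy r t with h | h | h
  · have := psum_add_le_psum lam h; omega
  · exact h
  · have := psum_add_le_psum lam h; omega

theorem jordanNilpotent_eq_reindex (K : Type*) [Field K] {k : ℕ} (lam : Fin k → ℕ) :
    jordanNilpotent K (∑ r, lam r) k lam =
      reindex finSigmaFinEquiv finSigmaFinEquiv (blockShift K lam) := by
  rw [← Equiv.symm_apply_eq (reindex _ _), reindex_symm]
  ext ⟨r, p⟩ ⟨s, q⟩
  simp only [reindex_apply, Equiv.symm_symm, submatrix_apply, jordanNilpotent, blockShift,
    of_apply, val_finSigmaFinEquiv_mk]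
  refine if_congr ⟨?_, ?_⟩ rfl rfl
  · rintro ⟨hsucc, t, ht, ht'⟩
    obtain rfl : t = r := eq_of_lt_psum_add ht (by omega) (Nat.le_add_right _ _) (by omega)
    obtain rfl : s = t :=
      eq_of_lt_psum_add (i := psum lam s + q) le_self_add (by omega) (by omega) (by omega)
    exact ⟨rfl, by omega⟩
  · rintro ⟨rfl, hq⟩
    exact ⟨by omega, r, by omega, by omega⟩

theorem card_fixed_even_eq_degeneracy {k : ℕ} {lam : Fin k → ℕ} {τ : Fin k → Fin k}
    (hτ : ∀ m, #{r | lam r = m ∧ τ r = r} = #{r | lam r = m} % 2) :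
    #{r | τ r = r ∧ Even (lam r)} = degeneracy lam := by
  calc #{r | τ r = r ∧ Even (lam r)}
      = ∑ m ∈ {m ∈ univ.image lam | Even m}, #{r | lam r = m ∧ τ r = r} := by
        rw [card_eq_sum_card_fiberwise (f := lam) (t := {m ∈ univ.image lam | Even m})
          fun r hr => by simp_all]
        refine sum_congr rfl fun m hm => congrArg card (ext fun r => ?_)
        simp only [mem_filter, mem_univ, true_and] at hm ⊢
        constructor
        · rintro ⟨⟨hfix, -⟩, rfl⟩
          exact ⟨rfl, hfix⟩
        · rintro ⟨rfl, hfix⟩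
          exact ⟨⟨hfix, hm.2⟩, rfl⟩
    _ = ∑ m ∈ {m ∈ univ.image lam | Even m}, if Odd #{r | lam r = m} then 1 else 0 :=
        sum_congr rfl fun m _ => by
          rw [hτ]; split_ifs with h <;> simp_all [Nat.odd_iff]
    _ = degeneracy lam := by rw [degeneracy, ← card_filter, filter_filter]

theorem jordan_fixed_rank_attained_general (K : Type*) [Field K] (n k : ℕ)
    (lam : Fin k → ℕ) (hpos : ∀ r, 1 ≤ lam r)
    (hn : ∑ r, lam r = n) :
    ∃ A : Matrix (Fin n) (Fin n) K, A.IsSymm ∧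
      jordanNilpotent K n k lam * A + A * (jordanNilpotent K n k lam)ᵀ = 0 ∧
      A.rank = n - degeneracy lam := by
  subst hn
  obtain ⟨τ, hτ, hℓ, hfix⟩ := exists_involutive_fiberwise_card_fixedPoints lam
  refine ⟨reindex finSigmaFinEquiv finSigmaFinEquiv (pairingForm K τ lam),
    (pairingForm_isSymm hτ hℓ).submatrix _, ?_, ?_⟩
  · rw [jordanNilpotent_eq_reindex, transpose_reindex, ← coe_reindexAlgEquiv K K, ← map_mul,
      ← map_mul, ← map_add, blockShift_mul_pairingForm_add hτ hℓ, map_zero]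
  · rw [rank_reindex, rank_pairingForm hτ hℓ, ← sum_pairedLength_add_card_fixed_even hpos,
      card_fixed_even_eq_degeneracy hfix, Nat.add_sub_cancel]

/-- There is a symmetric matrix `A` with `N_λ * A + A * N_λᵀ = 0` of rank exactly
`n - d(λ)`. -/
theorem jordan_fixed_rank_attained (K : Type*) [Field K] [CharZero K] (n k : ℕ)
    (lam : Fin k → ℕ) (hpos : ∀ r, 1 ≤ lam r) (hmono : Antitone lam)
    (hn : ∑ r, lam r = n) :
    ∃ A : Matrix (Fin n) (Fin n) K, A.IsSymm ∧
      jordanNilpotent K n k lam * A + A * (jordanNilpotent K n k lam)ᵀ = 0 ∧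
      A.rank = n - degeneracy lam :=
  jordan_fixed_rank_attained_general K n k lam hpos hn
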